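/- arXiv:1611.09338 — 3 statements merged into one kernel-verified Lean document; each statement's English description precedes it below -/
import Mathlib

section
/- If a bounded sequence a : ℕ → ℂ has a Cesàro mean value L along the intervals [1,N] (i.e. (1/N)∑_{n=1}^N a(n) → L as N → ∞), then its logarithmic mean along the same intervals also exists and equals L, i.e. (1/∑_{n=1}^N 1/n)·∑_{n=1}^N a(n)/n → L. -/
open Filter Topology

section AuxCesaroLog
open Finset Asymptotics

lemma abel_id (a : ℕ → ℂ) (N : ℕ) :
    ∑ n ∈ Finset.Icc 1 N, a n / n =
      (∑ n ∈ Finset.Icc 1 N, (∑ k ∈ Finset.Icc 1 n, a k) / ((n : ℂ) * (n + 1)))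
        + (∑ k ∈ Finset.Icc 1 N, a k) / ((N : ℂ) + 1) := by
  induction N with
  | zero => simp
  | succ N ih =>
    rw [Finset.sum_Icc_succ_top (by omega : 1 ≤ N + 1),
        Finset.sum_Icc_succ_top (by omega : 1 ≤ N + 1),
        Finset.sum_Icc_succ_top (by omega : 1 ≤ N + 1), ih]
    have h1 : ((N : ℂ) + 1) ≠ 0 := Nat.cast_add_one_ne_zero N
    have h2 : ((N : ℂ) + 1 + 1) ≠ 0 := by
      have := Nat.cast_add_one_ne_zero (R := ℂ) (N + 1); push_cast at this; convert this using 2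
    push_cast
    field_simp
    ring

lemma icc_range (f : ℕ → ℂ) (N : ℕ) :
    ∑ n ∈ Finset.Icc 1 N, f n = ∑ i ∈ Finset.range N, f (1+i) := by
  rw [← Finset.Ico_add_one_right_eq_Icc, Finset.sum_Ico_eq_sum_range]; rfl

/-- If a bounded sequence `a : ℕ → ℂ` has Cesàro mean `L` along `[1,N]`, then its
logarithmic mean along `[1,N]` also exists and equals `L`. -/
theorem cesaro_mean_implies_log_mean
    (a : ℕ → ℂ) (C : ℝ) (hC : ∀ n, ‖a n‖ ≤ C) (L : ℂ)
    (h : Tendsto (fun N : ℕ => (N : ℂ)⁻¹ * ∑ n ∈ Finset.Icc 1 N, a n) atTop (𝓝 L)) :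
    Tendsto (fun N : ℕ =>
      ((∑ n ∈ Finset.Icc 1 N, (n : ℝ)⁻¹ : ℝ) : ℂ)⁻¹ * ∑ n ∈ Finset.Icc 1 N, a n / (n : ℂ))
      atTop (𝓝 L) := by
  have hC0 : 0 ≤ C := (norm_nonneg (a 0)).trans (hC 0)
  set S : ℕ → ℂ := fun N => ∑ k ∈ Finset.Icc 1 N, a k with hS
  set H : ℕ → ℝ := fun N => ∑ n ∈ Finset.Icc 1 N, (n : ℝ)⁻¹ with hHdef
  -- H as range sum
  have hHr : ∀ N, H N = ∑ i ∈ Finset.range N, ((i : ℝ) + 1)⁻¹ := by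
    intro N
    show ∑ n ∈ Finset.Icc 1 N, (n : ℝ)⁻¹ = _
    rw [← Finset.Ico_add_one_right_eq_Icc, Finset.sum_Ico_eq_sum_range]
    apply Finset.sum_congr (by simp)
    intro i _; push_cast; ring_nf
  -- harmonic sums tend to infinity
  have hHtop : Tendsto H atTop atTop := by
    have := Real.tendsto_sum_range_one_div_nat_succ_atTop
    apply this.congr
    intro n
    rw [hHr]
    exact Finset.sum_congr rfl (by intros; rw [one_div])
  have hH1 : ∀ N, 1 ≤ N → (1:ℝ) ≤ H N := by
    intro N hN
    rw [hHr]
    calc (1:ℝ) = ∑ i ∈ Finset.range 1, ((i:ℝ)+1)⁻¹ := by simp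
    _ ≤ _ := Finset.sum_le_sum_of_subset_of_nonneg
        (Finset.range_subset_range.2 hN) (by intros; positivity)
  set W : ℕ → ℝ := fun N => ∑ i ∈ Finset.range N, ((i : ℝ) + 2)⁻¹ with hWdef
  have hWH : ∀ N, W N ≤ H N := by
    intro N; rw [hHr]; apply Finset.sum_le_sum; intro i _
    apply inv_anti₀ (by positivity) (by linarith)
  have hWnn : ∀ N, 0 ≤ W N := by intro N; apply Finset.sum_nonneg; intros; positivity
  have hWHdiff : ∀ N, H N - W N = 1 - ((N:ℝ)+1)⁻¹ := by
    intro N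
    rw [hHr, hWdef, ← Finset.sum_sub_distrib]
    have : ∀ i ∈ Finset.range N, ((i:ℝ)+1)⁻¹ - ((i:ℝ)+2)⁻¹
        = (fun j : ℕ => ((j:ℝ)+1)⁻¹) i - (fun j : ℕ => ((j:ℝ)+1)⁻¹) (i+1) := by
      intro i _; push_cast; ring_nf
    rw [Finset.sum_congr rfl this, Finset.sum_range_sub']
    norm_num
  -- the error term F
  set F : ℕ → ℂ := fun i => S (i+1) / (((i:ℂ)+1) * ((i:ℂ)+2)) - L / ((i:ℂ)+2) with hFdef
  have hne2 : ∀ i : ℕ, ((i:ℂ)+2) ≠ 0 := by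
    intro i hc; have h3 : ((i:ℂ)+1+1) = 0 := by rw [← hc]; ring
    exact Nat.cast_add_one_ne_zero (i+1) (by push_cast; linear_combination h3)
  have hFeq : ∀ i : ℕ, F i = (((i+1 : ℕ) : ℂ)⁻¹ * S (i+1) - L) * (((i:ℂ)+2))⁻¹ := by
    intro i
    have hne1 : ((i:ℂ)+1) ≠ 0 := Nat.cast_add_one_ne_zero i
    rw [hFdef]
    push_cast
    have key : (((i:ℂ)+1)⁻¹ * S (i+1) - L) * ((i:ℂ)+2)⁻¹
        = (((i:ℂ)+1) * ((i:ℂ)+2))⁻¹ * S (i+1) - L * ((i:ℂ)+2)⁻¹ := by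
      rw [mul_inv]; ring
    rw [key, div_eq_mul_inv, div_eq_mul_inv]; ring
  have hFo : F =o[atTop] (fun i => ((i:ℝ)+2)⁻¹) := by
    have hc : Tendsto (fun i : ℕ => ((i+1 : ℕ) : ℂ)⁻¹ * S (i+1) - L) atTop (𝓝 0) := by
      have := (h.comp (tendsto_add_atTop_nat 1))
      simpa using (tendsto_sub_nhds_zero_iff.2 this)
    have h1 : (fun i : ℕ => ((i+1 : ℕ) : ℂ)⁻¹ * S (i+1) - L) =o[atTop] (fun _ : ℕ => (1:ℝ)) :=
      (isLittleO_one_iff ℝ).2 hc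
    have h2 : (fun i : ℕ => (((i:ℂ)+2))⁻¹) =O[atTop] (fun i => ((i:ℝ)+2)⁻¹) := by
      apply isBigO_of_le
      intro i
      rw [norm_inv, Real.norm_eq_abs]
      have : ‖(i:ℂ)+2‖ = (i:ℝ)+2 := by
        rw [show ((i:ℂ)+2) = (((i:ℝ)+2 : ℝ) : ℂ) by push_cast; ring, Complex.norm_real,
          Real.norm_eq_abs, abs_of_pos (by positivity)]
      rw [this, abs_of_pos (by positivity)]
    have h3 := h1.mul_isBigO h2
    simp only [one_mul] at h3
    exact h3.congr' (by filter_upwards with i; rw [hFeq i]) (by rfl)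
  have hgsum : Tendsto (fun n => ∑ i ∈ Finset.range n, ((i:ℝ)+2)⁻¹) atTop atTop := by
    have h2 : Tendsto (fun n : ℕ => H (n+1) - 1) atTop atTop :=
      tendsto_atTop_add_const_right _ (-1) (hHtop.comp (tendsto_add_atTop_nat 1))
    apply h2.congr
    intro n
    rw [hHr, Finset.sum_range_succ']
    have : ∀ i ∈ Finset.range n, ((((i+1:ℕ)):ℝ)+1)⁻¹ = ((i:ℝ)+2)⁻¹ := by
      intro i _; push_cast; ring_nf
    rw [Finset.sum_congr rfl this]
    norm_num
  have hEoH : (fun n => ∑ i ∈ Finset.range n, F i) =o[atTop] H := by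
    have hEo : (fun n => ∑ i ∈ Finset.range n, F i) =o[atTop] W :=
      hFo.sum_range (fun i => by positivity) hgsum
    refine hEo.trans_isBigO (isBigO_of_le _ fun n => ?_)
    rw [Real.norm_eq_abs, Real.norm_eq_abs, abs_of_nonneg (hWnn n),
      abs_of_nonneg ((hWnn n).trans (hWH n))]
    exact hWH n
  set E : ℕ → ℂ := fun n => ∑ i ∈ Finset.range n, F i with hEdef
  -- decomposition of the main sum
  have hdecomp : ∀ N : ℕ, ∑ n ∈ Finset.Icc 1 N, a n / n =
      L * ((W N : ℝ) : ℂ) + E N + S N / ((N:ℂ)+1) := by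
    intro N
    rw [abel_id a N]
    congr 1
    rw [icc_range (fun n => (∑ k ∈ Finset.Icc 1 n, a k) / ((n : ℂ) * (n + 1)))]
    rw [hEdef, hWdef]
    push_cast
    rw [Finset.mul_sum, ← Finset.sum_add_distrib]
    apply Finset.sum_congr rfl
    intro i _
    rw [hFdef]
    push_cast
    simp only [hS]
    ring
  -- the two error pieces tend to zero
  have hHpos : ∀ N, 1 ≤ N → (0:ℝ) < H N := fun N hN => lt_of_lt_of_le one_pos (hH1 N hN)
  have hHne : ∀ N : ℕ, 1 ≤ N → ((H N : ℝ) : ℂ) ≠ 0 := by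
    intro N hN; exact_mod_cast (hHpos N hN).ne'
  -- piece 2 tends to zero
  have hp2 : Tendsto (fun N => ((H N : ℝ) : ℂ)⁻¹ * E N) atTop (𝓝 0) := by
    have hratio : Tendsto (fun n => ‖E n‖ / H n) atTop (𝓝 0) :=
      (hEoH.norm_left).tendsto_div_nhds_zero
    apply squeeze_zero_norm' _ hratio
    filter_upwards [eventually_ge_atTop 1] with N hN
    rw [norm_mul, norm_inv, Complex.norm_real, Real.norm_eq_abs,
      abs_of_pos (hHpos N hN), div_eq_mul_inv, mul_comm]
  -- piece 1 tends to zero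
  have hp1 : Tendsto (fun N => ((H N : ℝ) : ℂ)⁻¹ *
      (L * (((W N : ℝ) : ℂ) - ((H N : ℝ) : ℂ)) + S N / ((N:ℂ)+1))) atTop (𝓝 0) := by
    have hlim : Tendsto (fun N => (H N)⁻¹ * (‖L‖ + C)) atTop (𝓝 0) := by
      have := (tendsto_inv_atTop_zero.comp hHtop).mul_const (‖L‖ + C)
      simpa using this
    apply squeeze_zero_norm' _ hlim
    filter_upwards [eventually_ge_atTop 1] with N hN
    have hbound : ‖L * (((W N : ℝ) : ℂ) - ((H N : ℝ) : ℂ)) + S N / ((N:ℂ)+1)‖ ≤ ‖L‖ + C := by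
      refine (norm_add_le _ _).trans (add_le_add ?_ ?_)
      · rw [norm_mul]
        have hb1 : ‖((W N : ℝ) : ℂ) - ((H N : ℝ) : ℂ)‖ ≤ 1 := by
          rw [← Complex.ofReal_sub, Complex.norm_real, Real.norm_eq_abs, abs_sub_comm,
            abs_of_nonneg (by linarith [hWH N]), hWHdiff N]
          have : (0:ℝ) ≤ ((N:ℝ)+1)⁻¹ := by positivity
          linarith
        calc ‖L‖ * _ ≤ ‖L‖ * 1 := by gcongr
        _ = ‖L‖ := mul_one _
      · rw [norm_div]
        have hSb : ‖S N‖ ≤ C * N := by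
          calc ‖S N‖ ≤ ∑ k ∈ Finset.Icc 1 N, ‖a k‖ := norm_sum_le _ _
          _ ≤ ∑ k ∈ Finset.Icc 1 N, C := Finset.sum_le_sum (fun k _ => hC k)
          _ = C * N := by rw [Finset.sum_const, Nat.card_Icc]; simp [mul_comm]
        have hnorm : ‖((N:ℂ)+1)‖ = (N:ℝ)+1 := by
          rw [show ((N:ℂ)+1) = (((N:ℝ)+1 : ℝ) : ℂ) by push_cast; ring, Complex.norm_real,
            Real.norm_eq_abs, abs_of_pos (by positivity)]
        rw [hnorm, div_le_iff₀ (by positivity)]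
        calc ‖S N‖ ≤ C * N := hSb
        _ ≤ C * ((N:ℝ)+1) := by nlinarith
    rw [norm_mul, norm_inv, Complex.norm_real, Real.norm_eq_abs, abs_of_pos (hHpos N hN)]
    exact mul_le_mul_of_nonneg_left hbound (by positivity)
  -- combine
  have hkey : (fun N : ℕ => ((H N : ℝ) : ℂ)⁻¹ *
        (L * (((W N : ℝ) : ℂ) - ((H N : ℝ) : ℂ)) + S N / ((N:ℂ)+1))
        + ((H N : ℝ) : ℂ)⁻¹ * E N)
      =ᶠ[atTop] (fun N : ℕ => ((H N : ℝ) : ℂ)⁻¹ * ∑ n ∈ Finset.Icc 1 N, a n / n - L) := by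
    filter_upwards [eventually_ge_atTop 1] with N hN
    rw [hdecomp N]
    have h1 := hHne N hN
    field_simp
    ring
  rw [← tendsto_sub_nhds_zero_iff]
  have hsum := hp1.add hp2
  rw [add_zero] at hsum
  exact hsum.congr' hkey

end AuxCesaroLog
end

section
/- Let G be a nilpotent group of nilpotency class s (i.e. G_{s+1} is trivial, where G₁ = G and G_{j+1} = [G, G_j]). Then for every r ∈ ℕ and all g₁,…,g_s ∈ G, the iterated commutator satisfies [[…[g₁,g₂],g₃],…,g_s]^{r^s} = [[…[g₁^r,g₂^r],g₃^r],…,g_s^r]. -/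
open scoped commutatorElement

private lemma commutator_mul_left' {H : Type*} [Group H] (a b c : H) :
    ⁅a * b, c⁆ = a * ⁅b, c⁆ * a⁻¹ * ⁅a, c⁆ := by
  simp only [commutatorElement_def, mul_inv_rev]
  simp [mul_assoc]

private lemma commutator_mul_right' {H : Type*} [Group H] (a b c : H) :
    ⁅a, b * c⁆ = ⁅a, b⁆ * b * ⁅a, c⁆ * b⁻¹ := by
  simp only [commutatorElement_def, mul_inv_rev]
  simp [mul_assoc]

private lemma comm_pow_left {H : Type*} [Group H] (x z : H)
    (hc : ∀ w, Commute ⁅x, z⁆ w) (i : ℕ) : ⁅x ^ i, z⁆ = ⁅x, z⁆ ^ i := by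
  induction i with
  | zero => simp
  | succ i ih =>
    rw [pow_succ', commutator_mul_left', ih, ((hc x).pow_left i).symm.eq]
    simp [mul_assoc, pow_succ]

private lemma comm_pow {H : Type*} [Group H] (x z : H)
    (hc : ∀ w, Commute ⁅x, z⁆ w) (i j : ℕ) : ⁅x ^ i, z ^ j⁆ = ⁅x, z⁆ ^ (i * j) := by
  induction j with
  | zero => simp
  | succ j ih =>
    rw [pow_succ', commutator_mul_right', ih, comm_pow_left x z hc i]
    calc ⁅x, z⁆ ^ i * z * ⁅x, z⁆ ^ (i * j) * z⁻¹
        = ⁅x, z⁆ ^ i * (z * ⁅x, z⁆ ^ (i * j) * z⁻¹) := by simp [mul_assoc]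
      _ = ⁅x, z⁆ ^ i * ⁅x, z⁆ ^ (i * j) := by
          rw [← ((hc z).pow_left (i * j)).eq, mul_inv_cancel_right]
      _ = ⁅x, z⁆ ^ (i * (j + 1)) := by rw [← pow_add]; congr 1; ring

private lemma foldl_mem_lcs {G : Type*} [Group G] (l : List G) :
    ∀ (g : G) (k : ℕ), g ∈ (⊤ : Subgroup G).lowerCentralSeries k →
      List.foldl (fun x y => ⁅x, y⁆) g l ∈ (⊤ : Subgroup G).lowerCentralSeries (k + l.length) := by
  induction l with
  | nil => simp only [List.foldl_nil, List.length_nil, Nat.add_zero]; exact fun g k h => h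
  | cons z l ih =>
    intro g k hg
    have h1 : ⁅g, z⁆ ∈ (⊤ : Subgroup G).lowerCentralSeries (k + 1) := by
      show ⁅g, z⁆ ∈ ⁅(⊤ : Subgroup G).lowerCentralSeries k, (⊤ : Subgroup G)⁆
      exact Subgroup.commutator_mem_commutator hg (Subgroup.mem_top z)
    have := ih ⁅g, z⁆ (k + 1) h1
    simpa [Nat.add_right_comm k 1 l.length, Nat.add_assoc] using this

private lemma key_lemma {G : Type*} [Group G] (r : ℕ) (g₁ : G) (l : List G) :
    (List.foldl (fun x y => ⁅x, y⁆) (g₁ ^ r) (l.map (· ^ r)))⁻¹ *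
      (List.foldl (fun x y => ⁅x, y⁆) g₁ l) ^ r ^ (l.length + 1) ∈
      (⊤ : Subgroup G).lowerCentralSeries (l.length + 1) := by
  induction l using List.reverseRecOn with
  | nil => simpa using Subgroup.one_mem _
  | append_singleton l z ih =>
    set m := l.length with hm
    have hlen : (l ++ [z]).length = m + 1 := by simp [hm]
    rw [hlen]
    set a := List.foldl (fun x y => ⁅x, y⁆) g₁ l with ha
    set b := List.foldl (fun x y => ⁅x, y⁆) (g₁ ^ r) (l.map (· ^ r)) with hb
    have hfold1 : List.foldl (fun x y => ⁅x, y⁆) g₁ (l ++ [z]) = ⁅a, z⁆ := by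
      rw [List.foldl_append]; rfl
    have hfold2 : List.foldl (fun x y => ⁅x, y⁆) (g₁ ^ r) ((l ++ [z]).map (· ^ r)) =
        ⁅b, z ^ r⁆ := by
      rw [List.map_append, List.foldl_append]; rfl
    rw [hfold1, hfold2]
    have haγ : a ∈ (⊤ : Subgroup G).lowerCentralSeries m := by
      have := foldl_mem_lcs l g₁ 0 (by simp)
      simpa using this
    set c : G := b⁻¹ * a ^ r ^ (m + 1) with hc
    have hcγ : c ∈ (⊤ : Subgroup G).lowerCentralSeries (m + 1) := ih
    have hbc : b = a ^ r ^ (m + 1) * c⁻¹ := by rw [hc]; group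
    set N := (⊤ : Subgroup G).lowerCentralSeries (m + 2) with hN
    rw [← QuotientGroup.eq_one_iff (N := N)]
    set π : G →* G ⧸ N := QuotientGroup.mk' N with hπ
    show π (⁅b, z ^ r⁆⁻¹ * ⁅a, z⁆ ^ r ^ (m + 1 + 1)) = 1
    have central : ∀ p ∈ (⊤ : Subgroup G).lowerCentralSeries (m + 1), ∀ w : G ⧸ N, Commute (π p) w := by
      intro p hp w
      induction w using QuotientGroup.induction_on with
      | H q =>
        have hpq : ⁅p, q⁆ ∈ N := by
          show ⁅p, q⁆ ∈ ⁅(⊤ : Subgroup G).lowerCentralSeries (m + 1), (⊤ : Subgroup G)⁆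
          exact Subgroup.commutator_mem_commutator hp (Subgroup.mem_top q)
        have h1 : π ⁅p, q⁆ = 1 := (QuotientGroup.eq_one_iff _).mpr hpq
        rw [map_commutatorElement] at h1
        rw [← commutatorElement_eq_one_iff_commute]
        exact h1
    have hcomm_az : ∀ w, Commute ⁅π a, π z⁆ w := by
      intro w
      rw [← map_commutatorElement]
      refine central ⁅a, z⁆ ?_ w
      show ⁅a, z⁆ ∈ ⁅(⊤ : Subgroup G).lowerCentralSeries m, (⊤ : Subgroup G)⁆
      exact Subgroup.commutator_mem_commutator haγ (Subgroup.mem_top z)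
    have hcentc : ∀ w, Commute (π c⁻¹) w := fun w => by
      rw [map_inv]; exact (central c hcγ w).inv_left
    have hπb : π b = π a ^ r ^ (m + 1) * π c⁻¹ := by rw [hbc]; simp [map_mul, map_pow]
    have step : ⁅π b, π z ^ r⁆ = ⁅π a, π z⁆ ^ r ^ (m + 1 + 1) := by
      rw [hπb, commutator_mul_left' (π a ^ r ^ (m + 1)) (π c⁻¹) (π z ^ r),
        (hcentc (π z ^ r)).commutator_eq, mul_one, mul_inv_cancel, one_mul,
        comm_pow (π a) (π z) hcomm_az, ← pow_succ]
    simp only [map_mul, map_inv, map_pow, map_commutatorElement, step]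
    simp

/-- In a nilpotent group of class `s` (i.e. with `G_{s+1}` trivial, where `G₁ = G` and
`G_{j+1} = [G, G_j]`, so `lowerCentralSeries G s = ⊥`), for every `r ∈ ℕ` the iterated
commutator satisfies
`[[…[g₁,g₂],g₃],…,g_s]^{r^s} = [[…[g₁^r,g₂^r],g₃^r],…,g_s^r]`.
Here the iterated commutator of `g₁` with the list `[g₂,…,g_s]` is written as a fold. -/
theorem iterated_commutator_pow
    (G : Type*) [Group G] (s : ℕ) (hs : 1 ≤ s)
    (hnil : (⊤ : Subgroup G).lowerCentralSeries s = ⊥)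
    (r : ℕ) (g₁ : G) (l : List G) (hl : l.length + 1 = s) :
    (List.foldl (fun x y => ⁅x, y⁆) g₁ l) ^ (r ^ s) =
      List.foldl (fun x y => ⁅x, y⁆) (g₁ ^ r) (l.map (· ^ r)) := by
  subst hl
  have h := key_lemma r g₁ l
  rw [hnil, Subgroup.mem_bot] at h
  exact (inv_mul_eq_one.mp h).symm
end

section
/- Base case of the anti-uniformity estimate: if a : ℕ → ℂ is bounded by 1 and admits correlations for Cesàro averages on intervals I = (I_N) with |I_N| → ∞, then limsup_{M→∞} limsup_{N→∞} 𝔼_{n∈I_N} |𝔼_{m∈[M]} a(m+n)| ≤ 4‖a‖_{U^1(I)}. -/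
open Filter Finset Topology

/-- Cesàro average of `f` over the interval `I N`. -/
noncomputable def cesaroAvg (I : ℕ → Finset ℕ) (f : ℕ → ℂ) (N : ℕ) : ℂ :=
  ((I N).card : ℂ)⁻¹ * ∑ n ∈ I N, f n

lemma cesaroAvg_const_mul (I : ℕ → Finset ℕ) (k : ℂ) (f : ℕ → ℂ) (N : ℕ) :
    cesaroAvg I (fun n => k * f n) N = k * cesaroAvg I f N := by
  simp only [cesaroAvg]
  rw [Finset.mul_sum, Finset.mul_sum]
  rw [Finset.mul_sum]; ring_nf

lemma cesaroAvg_sum {α : Type*} (s : Finset α) (I : ℕ → Finset ℕ) (f : α → ℕ → ℂ) (N : ℕ) :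
    cesaroAvg I (fun n => ∑ x ∈ s, f x n) N = ∑ x ∈ s, cesaroAvg I (f x) N := by
  simp only [cesaroAvg, Finset.mul_sum]
  rw [Finset.sum_comm]

lemma cesaroAvg_conj (I : ℕ → Finset ℕ) (f : ℕ → ℂ) (N : ℕ) :
    cesaroAvg I (fun n => (starRingEnd ℂ) (f n)) N = (starRingEnd ℂ) (cesaroAvg I f N) := by
  simp [cesaroAvg]

lemma sum_shift (lo hi s : ℕ) (f : ℕ → ℂ) :
    ∑ n ∈ Finset.Icc lo hi, f (n + s) = ∑ n ∈ Finset.Icc (lo + s) (hi + s), f n := by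
  rw [← Finset.map_add_right_Icc, Finset.sum_map]
  rfl

lemma diff_sum_bound (lo hi s : ℕ) (f : ℕ → ℂ) (hf : ∀ n, ‖f n‖ ≤ 1) :
    ‖(∑ n ∈ Finset.Icc (lo + s) (hi + s), f n) - ∑ n ∈ Finset.Icc lo hi, f n‖ ≤ 2 * s := by
  set A := Finset.Icc (lo + s) (hi + s)
  set B := Finset.Icc lo hi
  have key : (∑ n ∈ A, f n) - ∑ n ∈ B, f n = (∑ n ∈ A \ B, f n) - ∑ n ∈ B \ A, f n := by
    rw [Finset.sum_sdiff_sub_sum_sdiff]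
  rw [key]
  have hAB : A \ B ⊆ Finset.Icc (hi + 1) (hi + s) := by
    intro n hn
    simp only [A, B, Finset.mem_sdiff, Finset.mem_Icc, not_and, not_le] at hn ⊢
    obtain ⟨⟨h1, h2⟩, h3⟩ := hn
    exact ⟨by omega, h2⟩
  have hBA : B \ A ⊆ Finset.Ico lo (lo + s) := by
    intro n hn
    simp only [A, B, Finset.mem_sdiff, Finset.mem_Icc, not_and, not_le, Finset.mem_Ico] at hn ⊢
    obtain ⟨⟨h1, h2⟩, h3⟩ := hn
    refine ⟨h1, ?_⟩
    by_contra h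
    push_neg at h
    exact absurd (h3 h) (by omega)
  have b1 : ‖∑ n ∈ A \ B, f n‖ ≤ (s : ℝ) := by
    refine (norm_sum_le _ _).trans ?_
    calc ∑ n ∈ A \ B, ‖f n‖ ≤ ∑ _n ∈ A \ B, (1:ℝ) := Finset.sum_le_sum fun n _ => hf n
      _ = (A \ B).card := by simp
      _ ≤ ((Finset.Icc (hi+1) (hi+s)).card : ℝ) := by
          exact_mod_cast Nat.cast_le.mpr (Finset.card_le_card hAB)
      _ ≤ (s : ℝ) := by simp [Nat.Icc_eq_range']
  have b2 : ‖∑ n ∈ B \ A, f n‖ ≤ (s : ℝ) := by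
    refine (norm_sum_le _ _).trans ?_
    calc ∑ n ∈ B \ A, ‖f n‖ ≤ ∑ _n ∈ B \ A, (1:ℝ) := Finset.sum_le_sum fun n _ => hf n
      _ = (B \ A).card := by simp
      _ ≤ ((Finset.Ico lo (lo+s)).card : ℝ) := by
          exact_mod_cast Nat.cast_le.mpr (Finset.card_le_card hBA)
      _ ≤ (s : ℝ) := by simp
  calc ‖(∑ n ∈ A \ B, f n) - ∑ n ∈ B \ A, f n‖
      ≤ ‖∑ n ∈ A \ B, f n‖ + ‖∑ n ∈ B \ A, f n‖ := norm_sub_le _ _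
    _ ≤ s + s := add_le_add b1 b2
    _ = 2 * s := by ring

lemma cesaroAvg_shift (lo hi : ℕ → ℕ) (I : ℕ → Finset ℕ)
    (hI : ∀ N, I N = Finset.Icc (lo N) (hi N))
    (hIcard : Tendsto (fun N => (I N).card) atTop atTop)
    (f : ℕ → ℂ) (hf : ∀ n, ‖f n‖ ≤ 1) (s : ℕ) :
    Tendsto (fun N => cesaroAvg I (fun n => f (n + s)) N - cesaroAvg I f N) atTop (𝓝 0) := by
  apply squeeze_zero_norm (a := fun N => ((I N).card : ℝ)⁻¹ * (2 * (s:ℝ)))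
  · intro N
    have : cesaroAvg I (fun n => f (n + s)) N - cesaroAvg I f N
        = ((I N).card : ℂ)⁻¹ * ((∑ n ∈ Finset.Icc (lo N + s) (hi N + s), f n)
            - ∑ n ∈ Finset.Icc (lo N) (hi N), f n) := by
      simp only [cesaroAvg, hI N, sum_shift]
      ring
    rw [this, norm_mul]
    gcongr
    · simp
    · exact diff_sum_bound _ _ _ _ hf
  · have h1 : Tendsto (fun N => ((I N).card : ℝ)) atTop atTop :=
      tendsto_natCast_atTop_atTop.comp hIcard
    have := (tendsto_inv_atTop_zero.comp h1).mul_const (2 * (s:ℝ))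
    simpa using this

/-- limits of pair correlations -/
lemma pair_limit (lo hi : ℕ → ℕ) (I : ℕ → Finset ℕ)
    (hI : ∀ N, I N = Finset.Icc (lo N) (hi N))
    (hIcard : Tendsto (fun N => (I N).card) atTop atTop)
    (a : ℕ → ℂ) (ha : ∀ n, ‖a n‖ ≤ 1)
    (c : ℕ → ℂ)
    (hc : ∀ h : ℕ, Tendsto (cesaroAvg I fun n => a (n + h) * (starRingEnd ℂ) (a n))
      atTop (𝓝 (c h)))
    (m m' : ℕ) :
    Tendsto (cesaroAvg I fun n => a (m + n) * (starRingEnd ℂ) (a (m' + n))) atTop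
      (𝓝 (if m' ≤ m then c (m - m') else (starRingEnd ℂ) (c (m' - m)))) := by
  have base : ∀ m m' : ℕ, m' ≤ m →
      Tendsto (cesaroAvg I fun n => a (m + n) * (starRingEnd ℂ) (a (m' + n))) atTop
        (𝓝 (c (m - m'))) := by
    intro m m' hle
    set g : ℕ → ℂ := fun k => a (k + (m - m')) * (starRingEnd ℂ) (a k) with hg
    have hfun : (fun n => a (m + n) * (starRingEnd ℂ) (a (m' + n)))
        = fun n => g (n + m') := by
      funext n
      simp only [hg]
      rw [show n + m' + (m - m') = m + n by omega, show m' + n = n + m' by omega]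
    have hgb : ∀ n, ‖g n‖ ≤ 1 := by
      intro n
      simp only [hg, norm_mul, Complex.norm_conj]
      calc ‖a (n + (m - m'))‖ * ‖a n‖ ≤ 1 * 1 := by
            apply mul_le_mul (ha _) (ha _) (norm_nonneg _) zero_le_one
        _ = 1 := by ring
    have hshift := cesaroAvg_shift lo hi I hI hIcard g hgb m'
    have hbase := hc (m - m')
    have := hshift.add hbase
    rw [zero_add] at this
    rw [hfun]
    have heq : (fun N => (cesaroAvg I (fun n => g (n + m')) N - cesaroAvg I g N)
        + cesaroAvg I g N) = cesaroAvg I (fun n => g (n + m')) := by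
      funext N; ring
    rwa [heq] at this
  by_cases hle : m' ≤ m
  · simpa [hle] using base m m' hle
  · push_neg at hle
    simp only [if_neg (not_le.mpr hle)]
    have h1 := base m' m hle.le
    have hconj : (fun n => a (m + n) * (starRingEnd ℂ) (a (m' + n)))
        = fun n => (starRingEnd ℂ) (a (m' + n) * (starRingEnd ℂ) (a (m + n))) := by
      funext n
      rw [map_mul, Complex.conj_conj]
      ring
    have h2 : (cesaroAvg I fun n => a (m + n) * (starRingEnd ℂ) (a (m' + n)))
        = fun N => (starRingEnd ℂ) (cesaroAvg I (fun n => a (m' + n) * (starRingEnd ℂ) (a (m + n))) N) := by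
      funext N
      rw [hconj, cesaroAvg_conj]
    rw [h2]
    exact (Complex.continuous_conj.tendsto _).comp h1
lemma avg_sq_tendsto (lo hi : ℕ → ℕ) (I : ℕ → Finset ℕ)
    (hI : ∀ N, I N = Finset.Icc (lo N) (hi N))
    (hIcard : Tendsto (fun N => (I N).card) atTop atTop)
    (a : ℕ → ℂ) (ha : ∀ n, ‖a n‖ ≤ 1)
    (c : ℕ → ℂ)
    (hc : ∀ h : ℕ, Tendsto (cesaroAvg I fun n => a (n + h) * (starRingEnd ℂ) (a n))
      atTop (𝓝 (c h)))
    (M : ℕ) :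
    Tendsto (fun N => ((I N).card : ℝ)⁻¹ * ∑ n ∈ I N,
        ‖(M : ℂ)⁻¹ * ∑ m ∈ Finset.Icc 1 M, a (m + n)‖ ^ 2) atTop
      (𝓝 (((M:ℂ)⁻¹ * ((M:ℂ)⁻¹ * ∑ m ∈ Finset.Icc 1 M, ∑ m' ∈ Finset.Icc 1 M,
        (if m' ≤ m then c (m - m') else (starRingEnd ℂ) (c (m' - m))))).re)) := by
  set z : ℕ → ℂ := fun n => (M : ℂ)⁻¹ * ∑ m ∈ Finset.Icc 1 M, a (m + n) with hz
  -- expand the square as double sum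
  have expand : ∀ n, z n * (starRingEnd ℂ) (z n)
      = (M:ℂ)⁻¹ * ((M:ℂ)⁻¹ * ∑ m ∈ Finset.Icc 1 M, ∑ m' ∈ Finset.Icc 1 M,
          a (m + n) * (starRingEnd ℂ) (a (m' + n))) := by
    intro n
    rw [hz]
    simp only [map_mul, map_inv₀, Complex.conj_natCast, map_sum]
    rw [← Finset.sum_mul_sum]
    ring
  -- complex-level tendsto
  have hcomplex : Tendsto (cesaroAvg I (fun n => z n * (starRingEnd ℂ) (z n))) atTop
      (𝓝 ((M:ℂ)⁻¹ * ((M:ℂ)⁻¹ * ∑ m ∈ Finset.Icc 1 M, ∑ m' ∈ Finset.Icc 1 M,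
        (if m' ≤ m then c (m - m') else (starRingEnd ℂ) (c (m' - m)))))) := by
    have hrw : cesaroAvg I (fun n => z n * (starRingEnd ℂ) (z n))
        = fun N => (M:ℂ)⁻¹ * ((M:ℂ)⁻¹ * ∑ m ∈ Finset.Icc 1 M, ∑ m' ∈ Finset.Icc 1 M,
            cesaroAvg I (fun n => a (m + n) * (starRingEnd ℂ) (a (m' + n))) N) := by
      funext N
      calc cesaroAvg I (fun n => z n * (starRingEnd ℂ) (z n)) N
          = cesaroAvg I (fun n => (M:ℂ)⁻¹ * ((M:ℂ)⁻¹ * ∑ m ∈ Finset.Icc 1 M,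
              ∑ m' ∈ Finset.Icc 1 M, a (m + n) * (starRingEnd ℂ) (a (m' + n)))) N := by
            congr 1; funext n; exact expand n
        _ = (M:ℂ)⁻¹ * ((M:ℂ)⁻¹ * cesaroAvg I (fun n => ∑ m ∈ Finset.Icc 1 M,
              ∑ m' ∈ Finset.Icc 1 M, a (m + n) * (starRingEnd ℂ) (a (m' + n))) N) := by
            rw [cesaroAvg_const_mul, cesaroAvg_const_mul]
        _ = (M:ℂ)⁻¹ * ((M:ℂ)⁻¹ * ∑ m ∈ Finset.Icc 1 M, cesaroAvg I
              (fun n => ∑ m' ∈ Finset.Icc 1 M, a (m + n) * (starRingEnd ℂ) (a (m' + n))) N) := by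
            rw [cesaroAvg_sum]
        _ = (M:ℂ)⁻¹ * ((M:ℂ)⁻¹ * ∑ m ∈ Finset.Icc 1 M, ∑ m' ∈ Finset.Icc 1 M,
              cesaroAvg I (fun n => a (m + n) * (starRingEnd ℂ) (a (m' + n))) N) := by
            congr 2
            exact Finset.sum_congr rfl fun m _ => cesaroAvg_sum _ _ _ _
    rw [hrw]
    apply Tendsto.const_mul
    apply Tendsto.const_mul
    apply tendsto_finset_sum
    intro m _
    apply tendsto_finset_sum
    intro m' _
    exact pair_limit lo hi I hI hIcard a ha c hc m m'
  -- pass to real parts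
  have hre := (Complex.continuous_re.tendsto _).comp hcomplex
  have hfun : (fun N => (cesaroAvg I (fun n => z n * (starRingEnd ℂ) (z n)) N).re)
      = fun N => ((I N).card : ℝ)⁻¹ * ∑ n ∈ I N, ‖z n‖ ^ 2 := by
    funext N
    rw [cesaroAvg]
    have h1 : (((I N).card : ℕ) : ℂ)⁻¹ = ((((I N).card : ℝ)⁻¹ : ℝ) : ℂ) := by
      push_cast
      ring
    rw [h1, Complex.re_ofReal_mul]
    congr 1
    rw [Complex.re_sum]
    apply Finset.sum_congr rfl
    intro n _
    rw [Complex.mul_conj, Complex.ofReal_re, Complex.normSq_eq_norm_sq]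
  rw [← hfun]
  exact hre
lemma comb (r : ℕ → ℝ) (M : ℕ) :
    ∑ m ∈ Finset.Icc 1 M, ∑ m' ∈ Finset.Icc 1 M, r ((m - m') + (m' - m))
      = M * r 0 + 2 * ∑ k ∈ Finset.range M, ∑ h ∈ Finset.Icc 1 k, r h := by
  have inner : ∀ m ∈ Finset.Icc 1 M, ∑ m' ∈ Finset.Icc 1 M, r ((m - m') + (m' - m))
      = r 0 + (∑ h ∈ Finset.Icc 1 (m - 1), r h) + ∑ h ∈ Finset.Icc 1 (M - m), r h := by
    intro m hm
    rw [Finset.mem_Icc] at hm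
    obtain ⟨hm1, hmM⟩ := hm
    have hsplit : Finset.Icc 1 M = Finset.Ioc 0 M := by
      rw [← Finset.Icc_add_one_left_eq_Ioc, zero_add]
    rw [hsplit, ← Finset.sum_Ioc_consecutive _ (Nat.zero_le m) hmM]
    have part1 : ∑ m' ∈ Finset.Ioc 0 m, r ((m - m') + (m' - m))
        = r 0 + ∑ h ∈ Finset.Icc 1 (m - 1), r h := by
      have e1 : ∑ m' ∈ Finset.Ioc 0 m, r ((m - m') + (m' - m))
          = ∑ d ∈ Finset.range m, r d := by
        refine Finset.sum_nbij' (fun m' => m - m') (fun d => m - d) ?_ ?_ ?_ ?_ ?_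
        · intro x hx; simp only [Finset.mem_Ioc, Finset.mem_range] at *; omega
        · intro x hx; simp only [Finset.mem_Ioc, Finset.mem_range] at *; omega
        · intro x hx; simp only [Finset.mem_Ioc] at hx; omega
        · intro x hx; simp only [Finset.mem_range] at hx; omega
        · intro x hx; simp only [Finset.mem_Ioc] at hx; congr 1; omega
      have e2 : m = (m - 1) + 1 := by omega
      have e4 : ∑ d ∈ Finset.range m, r d = r 0 + ∑ i ∈ Finset.range (m - 1), r (i + 1) := by
        conv_lhs => rw [e2]
        rw [Finset.sum_range_succ']
        ring
      have e3 : ∑ i ∈ Finset.range (m - 1), r (i + 1) = ∑ h ∈ Finset.Icc 1 (m - 1), r h := by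
        refine Finset.sum_nbij' (fun i => i + 1) (fun h => h - 1) ?_ ?_ ?_ ?_ ?_
        · intro x hx; simp only [Finset.mem_Icc, Finset.mem_range] at *; omega
        · intro x hx; simp only [Finset.mem_Icc, Finset.mem_range] at *; omega
        · intro x hx; omega
        · intro x hx; simp only [Finset.mem_Icc] at hx; omega
        · intro x hx; rfl
      rw [e1, e4, e3]
    have part2 : ∑ m' ∈ Finset.Ioc m M, r ((m - m') + (m' - m))
        = ∑ h ∈ Finset.Icc 1 (M - m), r h := by
      refine Finset.sum_nbij' (fun m' => m' - m) (fun h => h + m) ?_ ?_ ?_ ?_ ?_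
      · intro x hx; simp only [Finset.mem_Ioc, Finset.mem_Icc] at *; omega
      · intro x hx; simp only [Finset.mem_Ioc, Finset.mem_Icc] at *; omega
      · intro x hx; simp only [Finset.mem_Ioc] at hx; omega
      · intro x hx; omega
      · intro x hx; simp only [Finset.mem_Ioc] at hx; congr 1; omega
    rw [part1, part2]
  rw [Finset.sum_congr rfl inner]
  have s1 : ∑ m ∈ Finset.Icc 1 M, (r 0 + (∑ h ∈ Finset.Icc 1 (m - 1), r h)
        + ∑ h ∈ Finset.Icc 1 (M - m), r h)
      = (∑ _m ∈ Finset.Icc 1 M, r 0) + (∑ m ∈ Finset.Icc 1 M, ∑ h ∈ Finset.Icc 1 (m - 1), r h)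
        + ∑ m ∈ Finset.Icc 1 M, ∑ h ∈ Finset.Icc 1 (M - m), r h := by
    rw [Finset.sum_add_distrib, Finset.sum_add_distrib]
  rw [s1]
  have c1 : (∑ _m ∈ Finset.Icc 1 M, r 0) = M * r 0 := by
    rw [Finset.sum_const, Nat.card_Icc]
    simp [nsmul_eq_mul]
  have c2 : ∑ m ∈ Finset.Icc 1 M, ∑ h ∈ Finset.Icc 1 (m - 1), r h
      = ∑ k ∈ Finset.range M, ∑ h ∈ Finset.Icc 1 k, r h := by
    refine Finset.sum_nbij' (fun m => m - 1) (fun k => k + 1) ?_ ?_ ?_ ?_ ?_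
    · intro x hx; simp only [Finset.mem_Icc, Finset.mem_range] at *; omega
    · intro x hx; simp only [Finset.mem_Icc, Finset.mem_range] at *; omega
    · intro x hx; simp only [Finset.mem_Icc] at hx; omega
    · intro x hx; omega
    · intro x hx; rfl
  have c3 : ∑ m ∈ Finset.Icc 1 M, ∑ h ∈ Finset.Icc 1 (M - m), r h
      = ∑ k ∈ Finset.range M, ∑ h ∈ Finset.Icc 1 k, r h := by
    refine Finset.sum_nbij' (fun m => M - m) (fun k => M - k) ?_ ?_ ?_ ?_ ?_
    · intro x hx; simp only [Finset.mem_Icc, Finset.mem_range] at *; omega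
    · intro x hx; simp only [Finset.mem_Icc, Finset.mem_range] at *; omega
    · intro x hx; simp only [Finset.mem_Icc] at hx; omega
    · intro x hx; simp only [Finset.mem_range] at hx; omega
    · intro x hx; rfl
  rw [c1, c2, c3]
  ring
lemma sum_range_cast_le (M : ℕ) : ∑ k ∈ Finset.range M, (k : ℝ) ≤ (M : ℝ) ^ 2 / 2 := by
  induction M with
  | zero => simp
  | succ n ih =>
    rw [Finset.sum_range_succ]
    push_cast
    nlinarith [ih]

lemma key_bound (T : ℕ → ℝ) (l : ℝ) (hl : 0 ≤ l)
    (hT : Tendsto (fun k : ℕ => (k : ℝ)⁻¹ * T k) atTop (𝓝 l)) (r0 : ℝ) {ε : ℝ} (hε : 0 < ε) :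
    ∀ᶠ M : ℕ in atTop,
      (M : ℝ)⁻¹ * ((M : ℝ)⁻¹ * ((M : ℝ) * r0 + 2 * ∑ k ∈ Finset.range M, T k)) ≤ l + ε := by
  have h4 : 0 < ε / 4 := by linarith
  obtain ⟨k0, hk0⟩ := (Metric.tendsto_atTop.mp hT (ε / 4) h4)
  set k1 := max k0 1 with hk1
  have hTk : ∀ k, k1 ≤ k → T k ≤ (l + ε / 4) * k := by
    intro k hk
    have h1 : 1 ≤ k := le_trans (le_max_right _ _) hk
    have hkpos : (0 : ℝ) < k := by exact_mod_cast h1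
    have := hk0 k (le_trans (le_max_left _ _) hk)
    rw [Real.dist_eq, abs_lt] at this
    have h2 : (k : ℝ)⁻¹ * T k ≤ l + ε / 4 := by linarith [this.2]
    calc T k = (k : ℝ) * ((k : ℝ)⁻¹ * T k) := by field_simp
      _ ≤ (k : ℝ) * (l + ε / 4) := by
          apply mul_le_mul_of_nonneg_left h2 (le_of_lt hkpos)
      _ = (l + ε / 4) * k := by ring
  set C0 := ∑ k ∈ Finset.range k1, |T k| with hC0
  have hC0nn : 0 ≤ C0 := Finset.sum_nonneg fun k _ => abs_nonneg _
  have hsum : ∀ M, k1 ≤ M →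
      ∑ k ∈ Finset.range M, T k ≤ C0 + (l + ε / 4) * ((M : ℝ) ^ 2 / 2) := by
    intro M hM
    have hsplit : ∑ k ∈ Finset.range M, T k
        = (∑ k ∈ Finset.range k1, T k) + ∑ k ∈ Finset.Ico k1 M, T k := by
      simp only [Finset.range_eq_Ico]
      exact (Finset.sum_Ico_consecutive _ (Nat.zero_le k1) hM).symm
    rw [hsplit]
    have b1 : ∑ k ∈ Finset.range k1, T k ≤ C0 :=
      Finset.sum_le_sum fun k _ => le_abs_self _
    have b2 : ∑ k ∈ Finset.Ico k1 M, T k ≤ (l + ε / 4) * ((M : ℝ) ^ 2 / 2) := by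
      calc ∑ k ∈ Finset.Ico k1 M, T k
          ≤ ∑ k ∈ Finset.Ico k1 M, (l + ε / 4) * (k : ℝ) := by
            apply Finset.sum_le_sum
            intro k hk
            exact hTk k (Finset.mem_Ico.mp hk).1
        _ ≤ ∑ k ∈ Finset.range M, (l + ε / 4) * (k : ℝ) := by
            apply Finset.sum_le_sum_of_subset_of_nonneg
            · rw [Finset.range_eq_Ico]
              exact Finset.Ico_subset_Ico (Nat.zero_le _) le_rfl
            · intro k _ _
              positivity
        _ = (l + ε / 4) * ∑ k ∈ Finset.range M, (k : ℝ) := by rw [Finset.mul_sum]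
        _ ≤ (l + ε / 4) * ((M : ℝ) ^ 2 / 2) := by
            apply mul_le_mul_of_nonneg_left (sum_range_cast_le M)
            linarith
    linarith
  have hz : Tendsto (fun M : ℕ => |r0| * (M : ℝ)⁻¹ + 2 * C0 * ((M : ℝ)⁻¹ * (M : ℝ)⁻¹))
      atTop (𝓝 0) := by
    have hinv : Tendsto (fun M : ℕ => ((M : ℝ))⁻¹) atTop (𝓝 0) :=
      tendsto_inv_atTop_zero.comp tendsto_natCast_atTop_atTop
    have := (hinv.const_mul (|r0|)).add ((hinv.mul hinv).const_mul (2 * C0))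
    simpa using this
  have hzev : ∀ᶠ M : ℕ in atTop,
      |r0| * (M : ℝ)⁻¹ + 2 * C0 * ((M : ℝ)⁻¹ * (M : ℝ)⁻¹) < ε / 2 := by
    apply hz.eventually_lt_const
    linarith
  filter_upwards [eventually_ge_atTop k1, eventually_ge_atTop 1, hzev] with M hM1 hM2 hsmall
  have hM0 : (0 : ℝ) < (M : ℝ) := by exact_mod_cast hM2
  have hMne : (M : ℝ) ≠ 0 := ne_of_gt hM0
  have step1 : (M : ℝ)⁻¹ * ((M : ℝ)⁻¹ * ((M : ℝ) * r0 + 2 * ∑ k ∈ Finset.range M, T k))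
      = r0 * (M : ℝ)⁻¹ + 2 * (∑ k ∈ Finset.range M, T k) * ((M : ℝ)⁻¹ * (M : ℝ)⁻¹) := by
    field_simp
  rw [step1]
  have hS := hsum M hM1
  have hsq : ((M : ℝ) ^ 2 / 2) * ((M : ℝ)⁻¹ * (M : ℝ)⁻¹) = 1 / 2 := by
    field_simp
  have hmono : 2 * (∑ k ∈ Finset.range M, T k) * ((M : ℝ)⁻¹ * (M : ℝ)⁻¹)
      ≤ 2 * (C0 + (l + ε / 4) * ((M : ℝ) ^ 2 / 2)) * ((M : ℝ)⁻¹ * (M : ℝ)⁻¹) := by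
    have hp : 0 ≤ (M : ℝ)⁻¹ * (M : ℝ)⁻¹ := by positivity
    nlinarith [hS, hp]
  have hr0 : r0 * (M : ℝ)⁻¹ ≤ |r0| * (M : ℝ)⁻¹ := by
    apply mul_le_mul_of_nonneg_right (le_abs_self _)
    positivity
  have expand2 : 2 * (C0 + (l + ε / 4) * ((M : ℝ) ^ 2 / 2)) * ((M : ℝ)⁻¹ * (M : ℝ)⁻¹)
      = 2 * C0 * ((M : ℝ)⁻¹ * (M : ℝ)⁻¹) + (l + ε / 4) := by
    have : (l + ε / 4) * (((M : ℝ) ^ 2 / 2) * ((M : ℝ)⁻¹ * (M : ℝ)⁻¹)) = (l + ε/4) * (1/2) := by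
      rw [hsq]
    nlinarith [this]
  linarith [hmono, hr0, hsmall, expand2.le, expand2.ge]
/-- Base case of the anti-uniformity estimate: if `a` is bounded by `1` and admits
correlations for Cesàro averages on intervals `I` with `|I_N| → ∞`, then
`limsup_M limsup_N 𝔼_{n∈I_N} |𝔼_{m∈[M]} a(m+n)| ≤ 4 ‖a‖_{U^1(I)}`, where the seminorm
`u = ‖a‖_{U^1(I)}` is characterized by
`u² = lim_H 𝔼_{h∈[H]} (lim_N 𝔼_{n∈I_N} a(n+h) conj(a(n)))`. -/
theorem anti_uniformity_base_case
    (lo hi : ℕ → ℕ) (I : ℕ → Finset ℕ)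
    (hI : ∀ N, I N = Finset.Icc (lo N) (hi N))
    (hIcard : Tendsto (fun N => (I N).card) atTop atTop)
    (a : ℕ → ℂ) (ha : ∀ n, ‖a n‖ ≤ 1)
    (hcorr : ∀ (k : ℕ) (sh : Fin k → ℕ) (cj : Fin k → Bool),
      ∃ L : ℂ, Tendsto (cesaroAvg I fun m => ∏ j,
        if cj j then (starRingEnd ℂ) (a (m + sh j)) else a (m + sh j)) atTop (𝓝 L))
    (u : ℝ) (hu : 0 ≤ u)
    (c : ℕ → ℂ)
    (hc : ∀ h : ℕ, Tendsto (cesaroAvg I fun n => a (n + h) * (starRingEnd ℂ) (a n))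
      atTop (𝓝 (c h)))
    (hlim : Tendsto (fun H : ℕ => (H : ℂ)⁻¹ * ∑ h ∈ Finset.Icc 1 H, c h) atTop
      (𝓝 ((u ^ 2 : ℝ) : ℂ))) :
    limsup (fun M : ℕ => limsup (fun N : ℕ =>
        ((I N).card : ℝ)⁻¹ * ∑ n ∈ I N,
          ‖(M : ℂ)⁻¹ * ∑ m ∈ Finset.Icc 1 M, a (m + n)‖) atTop) atTop ≤ 4 * u := by
  -- abbreviations
  set F : ℕ → ℕ → ℝ := fun M N => ((I N).card : ℝ)⁻¹ * ∑ n ∈ I N,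
      ‖(M : ℂ)⁻¹ * ∑ m ∈ Finset.Icc 1 M, a (m + n)‖ with hF
  set G : ℕ → ℕ → ℝ := fun M N => ((I N).card : ℝ)⁻¹ * ∑ n ∈ I N,
      ‖(M : ℂ)⁻¹ * ∑ m ∈ Finset.Icc 1 M, a (m + n)‖ ^ 2 with hG
  set Lre : ℕ → ℝ := fun M => (((M:ℂ)⁻¹ * ((M:ℂ)⁻¹ * ∑ m ∈ Finset.Icc 1 M,
      ∑ m' ∈ Finset.Icc 1 M,
      (if m' ≤ m then c (m - m') else (starRingEnd ℂ) (c (m' - m))))).re) with hLre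
  -- norm bound on inner averages
  have hz1 : ∀ (M : ℕ) (n : ℕ), ‖(M : ℂ)⁻¹ * ∑ m ∈ Finset.Icc 1 M, a (m + n)‖ ≤ 1 := by
    intro M n
    rw [norm_mul, norm_inv, Complex.norm_natCast]
    rcases Nat.eq_zero_or_pos M with h | h
    · simp [h]
    · have hMpos : (0:ℝ) < M := by exact_mod_cast h
      have hb : ‖∑ m ∈ Finset.Icc 1 M, a (m + n)‖ ≤ (M:ℝ) := by
        refine (norm_sum_le _ _).trans ?_
        calc ∑ m ∈ Finset.Icc 1 M, ‖a (m + n)‖ ≤ ∑ _m ∈ Finset.Icc 1 M, (1:ℝ) :=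
              Finset.sum_le_sum fun m _ => ha _
          _ = ((Finset.Icc 1 M).card : ℝ) := by simp
          _ = (M:ℝ) := by simp [Nat.card_Icc]
      calc (M:ℝ)⁻¹ * ‖∑ m ∈ Finset.Icc 1 M, a (m + n)‖ ≤ (M:ℝ)⁻¹ * (M:ℝ) := by
            apply mul_le_mul_of_nonneg_left hb (by positivity)
        _ = 1 := by field_simp
  have hFnn : ∀ M N, 0 ≤ F M N := by
    intro M N
    apply mul_nonneg (by positivity)
    exact Finset.sum_nonneg fun n _ => norm_nonneg _
  have hFle1 : ∀ M N, F M N ≤ 1 := by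
    intro M N
    rw [hF]
    rcases Nat.eq_zero_or_pos (I N).card with h | h
    · simp [h]
    · have hcpos : (0:ℝ) < (I N).card := by exact_mod_cast h
      calc ((I N).card : ℝ)⁻¹ * ∑ n ∈ I N, ‖(M : ℂ)⁻¹ * ∑ m ∈ Finset.Icc 1 M, a (m + n)‖
          ≤ ((I N).card : ℝ)⁻¹ * ∑ _n ∈ I N, (1:ℝ) := by
            apply mul_le_mul_of_nonneg_left _ (by positivity)
            exact Finset.sum_le_sum fun n _ => hz1 M n
        _ = 1 := by
            rw [Finset.sum_const]
            simp
            field_simp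
  -- convergence of G M to Lre M
  have hGlim : ∀ M, Tendsto (fun N => G M N) atTop (𝓝 (Lre M)) := fun M =>
    avg_sq_tendsto lo hi I hI hIcard a ha c hc M
  -- pointwise Cauchy–Schwarz : F M N ≤ sqrt (G M N)
  have hFG : ∀ M N, F M N ≤ Real.sqrt (G M N) := by
    intro M N
    rcases Nat.eq_zero_or_pos (I N).card with h | h
    · have : F M N = 0 := by rw [hF]; simp [h]
      rw [this]
      exact Real.sqrt_nonneg _
    · have hcpos : (0:ℝ) < (I N).card := by exact_mod_cast h
      rw [Real.le_sqrt (hFnn M N) ?hy]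
      case hy =>
        apply mul_nonneg (by positivity)
        exact Finset.sum_nonneg fun n _ => by positivity
      rw [hF, hG]
      rw [mul_pow]
      have hcs := sq_sum_le_card_mul_sum_sq
        (s := I N) (f := fun n => ‖(M : ℂ)⁻¹ * ∑ m ∈ Finset.Icc 1 M, a (m + n)‖)
      calc (((I N).card : ℝ)⁻¹) ^ 2 * (∑ n ∈ I N, ‖(M : ℂ)⁻¹ * ∑ m ∈ Finset.Icc 1 M, a (m + n)‖) ^ 2
          ≤ (((I N).card : ℝ)⁻¹) ^ 2 * (((I N).card : ℝ) *
              ∑ n ∈ I N, ‖(M : ℂ)⁻¹ * ∑ m ∈ Finset.Icc 1 M, a (m + n)‖ ^ 2) := by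
            apply mul_le_mul_of_nonneg_left _ (by positivity)
            exact_mod_cast hcs
        _ = ((I N).card : ℝ)⁻¹ * ∑ n ∈ I N, ‖(M : ℂ)⁻¹ * ∑ m ∈ Finset.Icc 1 M, a (m + n)‖ ^ 2 := by
            field_simp
  -- limsup over N bound
  have hlimsupN : ∀ M, limsup (fun N => F M N) atTop ≤ Real.sqrt (Lre M) := by
    intro M
    have hsq : Tendsto (fun N => Real.sqrt (G M N)) atTop (𝓝 (Real.sqrt (Lre M))) :=
      (Real.continuous_sqrt.tendsto _).comp (hGlim M)
    have h1 : limsup (fun N => F M N) atTop ≤ limsup (fun N => Real.sqrt (G M N)) atTop :=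
      limsup_le_limsup (Eventually.of_forall (hFG M))
        (isCoboundedUnder_le_of_le atTop (hFnn M)) hsq.isBoundedUnder_le
    rwa [hsq.limsup_eq] at h1
  have hΦnn : ∀ M, 0 ≤ limsup (fun N => F M N) atTop := by
    intro M
    exact le_limsup_of_frequently_le (Frequently.of_forall (hFnn M))
      (isBoundedUnder_of ⟨1, fun N => hFle1 M N⟩)
  -- Cesàro averages of real parts converge
  set W : ℕ → ℝ := fun k => ∑ h ∈ Finset.Icc 1 k, (c h).re with hW
  have hWlim : Tendsto (fun k : ℕ => (k : ℝ)⁻¹ * W k) atTop (𝓝 (u ^ 2)) := by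
    have hcmp := (Complex.continuous_re.tendsto _).comp hlim
    have heq : Complex.re ∘ (fun H : ℕ => ((H : ℂ)⁻¹ * ∑ h ∈ Finset.Icc 1 H, c h))
        = fun k : ℕ => (k : ℝ)⁻¹ * W k := by
      funext H
      show ((H : ℂ)⁻¹ * ∑ h ∈ Finset.Icc 1 H, c h).re = _
      have h1 : ((H : ℕ) : ℂ)⁻¹ = ((((H : ℝ))⁻¹ : ℝ) : ℂ) := by push_cast; ring
      rw [h1, Complex.re_ofReal_mul, Complex.re_sum]
    rw [show ((((u ^ 2 : ℝ)) : ℂ)).re = u ^ 2 from Complex.ofReal_re _] at hcmp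
    rwa [heq] at hcmp
  -- the combinatorial identity
  have hLre_eq : ∀ M : ℕ, Lre M
      = (M : ℝ)⁻¹ * ((M : ℝ)⁻¹ * ((M : ℝ) * (c 0).re + 2 * ∑ k ∈ Finset.range M, W k)) := by
    intro M
    simp only [hLre]
    have h1 : ((M : ℕ) : ℂ)⁻¹ = ((((M : ℝ))⁻¹ : ℝ) : ℂ) := by push_cast; ring
    rw [h1, Complex.re_ofReal_mul, Complex.re_ofReal_mul, Complex.re_sum]
    have h2 : ∀ m ∈ Finset.Icc 1 M, (∑ m' ∈ Finset.Icc 1 M,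
        (if m' ≤ m then c (m - m') else (starRingEnd ℂ) (c (m' - m)))).re
        = ∑ m' ∈ Finset.Icc 1 M, (fun d => (c d).re) ((m - m') + (m' - m)) := by
      intro m _
      rw [Complex.re_sum]
      apply Finset.sum_congr rfl
      intro m' _
      by_cases hle : m' ≤ m
      · rw [if_pos hle]
        congr 2
        omega
      · rw [if_neg hle, Complex.conj_re]
        congr 2
        omega
    rw [Finset.sum_congr rfl h2, comb (fun d => (c d).re) M]
  -- eventual bound on Lre
  have hev : ∀ ε : ℝ, 0 < ε → ∀ᶠ M : ℕ in atTop, Lre M ≤ u ^ 2 + ε := by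
    intro ε hε
    have := key_bound W (u ^ 2) (sq_nonneg u) hWlim ((c 0).re) hε
    filter_upwards [this] with M hM
    rw [hLre_eq M]
    exact hM
  -- conclusion
  have main : ∀ ε : ℝ, 0 < ε →
      limsup (fun M : ℕ => limsup (fun N => F M N) atTop) atTop ≤ u + Real.sqrt ε := by
    intro ε hε
    apply limsup_le_of_le (isCoboundedUnder_le_of_le atTop hΦnn)
    filter_upwards [hev ε hε] with M hM
    calc limsup (fun N => F M N) atTop ≤ Real.sqrt (Lre M) := hlimsupN M
      _ ≤ Real.sqrt (u ^ 2 + ε) := Real.sqrt_le_sqrt hM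
      _ ≤ Real.sqrt ((u + Real.sqrt ε) ^ 2) := by
          apply Real.sqrt_le_sqrt
          nlinarith [Real.sq_sqrt hε.le, Real.sqrt_nonneg ε, hu]
      _ = u + Real.sqrt ε := Real.sqrt_sq (by positivity)
  have hfinal : limsup (fun M : ℕ => limsup (fun N => F M N) atTop) atTop ≤ u := by
    apply le_of_forall_pos_le_add
    intro δ hδ
    have := main (δ ^ 2) (by positivity)
    rwa [Real.sqrt_sq hδ.le] at this
  calc limsup (fun M : ℕ => limsup (fun N => F M N) atTop) atTop ≤ u := hfinal
    _ ≤ 4 * u := by linarith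
end
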